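/- Let $n \ge 3$ be prime and let $X_0, \dots, X_{n-1}$ be independent random variables with $\mathbb{P}[X_j = -1] = \mathbb{P}[X_j = 1] = 1/2$. Then the circulant matrix $\mathcal{C}_n$ with first row $X_0, \dots, X_{n-1}$ satisfies $\mathbb{P}[\mathcal{C}_n \text{ is singular}] = 2^{-n+1}$; this is exactly the probability that all entries $X_0, \dots, X_{n-1}$ are equal. -/

import Mathlib

/-!
The transposed circulant matrix with first row `v` is diagonalised by the Vandermonde matrix of a
primitive `n`-th root of unity `ζ`, so `det = ∏ₖ f (ζ ^ k)` with `f = ∑ⱼ vⱼ Tʲ`. For `n = p` an odd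
prime and odd integer entries, `f 1` is odd, hence nonzero; for `k ≠ 0`, `ζ ^ k` has minimal
polynomial `Φ_p = 1 + T + ⋯ + T ^ (p - 1)` over `ℤ`, and since `deg f ≤ p - 1`, `f (ζ ^ k) = 0`
forces `f = c • Φ_p`, i.e. all entries are equal. So almost surely the random matrix is singular
exactly when all `X j` agree, an event of probability `2 · 2⁻ⁿ`.
-/

open Finset Matrix

theorem IsPrimitiveRoot.pow_val_add_mul {M : Type*} [CommMonoid M] {n : ℕ} {ζ : M}
    (hζ : IsPrimitiveRoot ζ n) (a b : Fin n) (k : ℕ) :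
    ζ ^ ((a + b : Fin n) * k : ℕ) = ζ ^ (a * k : ℕ) * ζ ^ (b * k : ℕ) := by
  rw [Fin.val_add, pow_mul, ← pow_eq_pow_mod _ hζ.pow_eq_one, pow_add, mul_pow, ← pow_mul,
    ← pow_mul]

theorem Matrix.det_circulant_eq_prod {R : Type*} [CommRing R] [IsDomain R] {n : ℕ} [NeZero n]
    {ζ : R} (hζ : IsPrimitiveRoot ζ n) (v : Fin n → R) :
    (circulant v).det = ∏ k : Fin n, ∑ j : Fin n, v j * ζ ^ (j * k : ℕ) := by
  set W := vandermonde fun i : Fin n => ζ ^ (i : ℕ)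
  have hW : W.det ≠ 0 := det_vandermonde_ne_zero_iff.2 fun i j hij =>
    Fin.ext (hζ.pow_inj i.isLt j.isLt hij)
  have hdiag : (circulant v)ᵀ * W = W * diagonal fun k : Fin n => ∑ j, v j * ζ ^ (j * k : ℕ) := by
    ext i k
    rw [mul_diagonal, mul_apply, ← Equiv.sum_comp (Equiv.addRight i), mul_sum]
    refine sum_congr rfl fun j _ => ?_
    simp only [transpose_apply, circulant_apply, W, vandermonde_apply, ← pow_mul,
      Equiv.coe_addRight, add_sub_cancel_right, hζ.pow_val_add_mul]
    ring
  have := congrArg det hdiag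
  rwa [det_mul, det_mul, det_transpose, det_diagonal, mul_comm, mul_right_inj' hW] at this

open Polynomial in
theorem Polynomial.coeff_sum_fin_C_mul_X_pow {R : Type*} [Semiring R] {n : ℕ} (a : Fin n → R)
    (i : Fin n) : (∑ j : Fin n, C (a j) * X ^ (j : ℕ)).coeff i = a i := by
  simp [coeff_C_mul, coeff_X_pow, Fin.val_inj]

open Polynomial in
theorem IsPrimitiveRoot.eq_of_sum_intCast_mul_pow_eq_zero {K : Type*} [Field K] [CharZero K]
    {p : ℕ} [hp : Fact p.Prime] {μ : K} (hμ : IsPrimitiveRoot μ p) {a : Fin p → ℤ}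
    (h : ∑ j : Fin p, (a j : K) * μ ^ (j : ℕ) = 0) (i j : Fin p) : a i = a j := by
  set f : ℤ[X] := ∑ j : Fin p, C (a j) * X ^ (j : ℕ)
  have hdvd : cyclotomic p ℤ ∣ f := by
    rw [cyclotomic_eq_minpoly hμ hp.out.pos]
    refine minpoly.isIntegrallyClosed_dvd (hμ.isIntegral hp.out.pos) ?_
    simpa [f] using h
  have hdeg : f.natDegree ≤ (cyclotomic p ℤ).natDegree := by
    rw [natDegree_cyclotomic, Nat.totient_prime hp.out]
    exact natDegree_sum_le_of_forall_le _ _ fun j _ =>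
      (natDegree_C_mul_X_pow_le _ _).trans (Nat.le_sub_one_of_lt j.isLt)
  obtain ⟨c, hc⟩ : ∃ c, f = C c * cyclotomic p ℤ :=
    ⟨_, eq_leadingCoeff_mul_of_monic_of_dvd_of_natDegree_le (cyclotomic.monic p ℤ) hdvd hdeg⟩
  have hcoeff (m : Fin p) : a m = c := by
    simpa [f, coeff_sum_fin_C_mul_X_pow, cyclotomic_prime, finsetSum_coeff, coeff_X_pow,
      Fin.val_inj]
      using congrArg (coeff · m) hc
  rw [hcoeff i, hcoeff j]

theorem Int.odd_sum_of_odd_card {ι : Type*} {s : Finset ι} {f : ι → ℤ}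
    (hf : ∀ i ∈ s, Odd (f i)) (hs : Odd #s) : Odd (∑ i ∈ s, f i) := by
  rw [← ZMod.intCast_eq_one_iff_odd, Int.cast_sum,
    sum_congr rfl fun i hi => (hf i hi).intCast_zmod_two, sum_const, nsmul_one,
    hs.natCast_zmod_two]

theorem Matrix.det_circulant_eq_zero_iff_of_odd {p : ℕ} [hp : Fact p.Prime] (hp2 : p ≠ 2)
    {a : Fin p → ℤ} (ha : ∀ j, Odd (a j)) :
    (circulant a).det = 0 ↔ ∀ i j, a i = a j := by
  constructor
  · intro hdet
    have hζ := Complex.isPrimitiveRoot_exp p hp.out.ne_zero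
    have hdetℂ : (circulant fun j => (a j : ℂ)).det = 0 := by
      rw [← map_circulant, ← Int.cast_det, hdet, Int.cast_zero]
    rw [det_circulant_eq_prod hζ, prod_eq_zero_iff] at hdetℂ
    obtain ⟨k, -, hk⟩ := hdetℂ
    obtain rfl | hk0 := eq_or_ne k 0
    · have hsum : ∑ j, a j = 0 := by exact_mod_cast (by simpa using hk : ∑ j, (a j : ℂ) = 0)
      have hodd := Int.odd_sum_of_odd_card (s := univ) (fun j _ => ha j)
        (by simpa using hp.out.odd_of_ne_two hp2)
      rw [hsum] at hodd
      exact absurd hodd (by decide)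
    · have hcop : (k : ℕ).Coprime p :=
        (Nat.coprime_of_lt_prime (Fin.val_ne_zero_iff.2 hk0) k.isLt hp.out).symm
      refine (hζ.pow_of_coprime k hcop).eq_of_sum_intCast_mul_pow_eq_zero ?_
      simpa [← pow_mul, mul_comm] using hk
  · intro h
    refine det_zero_of_row_eq (i := 0) (j := 1) ?_ (funext fun j => h _ _)
    simp [Fin.ext_iff, Nat.one_mod_eq_one.2 hp.out.ne_one]

theorem Matrix.det_circulant_eq_zero_iff_of_sign {R : Type*} [CommRing R] [CharZero R]
    {p : ℕ} [Fact p.Prime] (hp2 : p ≠ 2) {x : Fin p → R} (hx : ∀ j, x j = 1 ∨ x j = -1) :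
    (circulant x).det = 0 ↔ ∀ i j, x i = x j := by
  have hodd (j : Fin p) : ∃ m : ℤ, Odd m ∧ x j = m := by
    rcases hx j with h | h
    exacts [⟨1, odd_one, by simp [h]⟩, ⟨-1, by decide, by simp [h]⟩]
  choose a ha hxa using hodd
  obtain rfl : x = fun j => (a j : R) := funext hxa
  rw [← map_circulant, ← Int.cast_det, Int.cast_eq_zero, det_circulant_eq_zero_iff_of_odd hp2 ha]
  simp only [Int.cast_inj]

open MeasureTheory ProbabilityTheory

theorem MeasureTheory.ae_eq_or_eq_of_measure_add_measure_eq_one {Ω β : Type*}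
    [MeasurableSpace Ω] {P : Measure Ω} [IsProbabilityMeasure P] [MeasurableSpace β]
    [MeasurableSingletonClass β] {Y : Ω → β} (hY : Measurable Y) {a b : β} (hab : a ≠ b)
    (h : P {ω | Y ω = a} + P {ω | Y ω = b} = 1) : ∀ᵐ ω ∂P, Y ω = a ∨ Y ω = b := by
  have hdisj : Disjoint {ω | Y ω = a} {ω | Y ω = b} :=
    Set.disjoint_left.2 fun ω ha hb => hab (ha.symm.trans hb)
  have hmeas : MeasurableSet {ω | Y ω = a ∨ Y ω = b} :=
    (hY (measurableSet_singleton a)).union (hY (measurableSet_singleton b))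
  refine mem_ae_iff.2 ((prob_compl_eq_zero_iff hmeas).2 ?_)
  rwa [Set.ofPred_or, measure_union hdisj (hY (measurableSet_singleton b))]

theorem forall_eq_iff_of_forall_eq_or_eq {ι α : Type*} [Nonempty ι] {x : ι → α} {a b : α}
    (hx : ∀ j, x j = a ∨ x j = b) : (∀ i j, x i = x j) ↔ (∀ j, x j = a) ∨ ∀ j, x j = b := by
  obtain ⟨j₀⟩ := ‹Nonempty ι›
  constructor
  · intro h
    rcases hx j₀ with h₀ | h₀
    exacts [Or.inl fun j => (h j j₀).trans h₀, Or.inr fun j => (h j j₀).trans h₀]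
  · rintro (h | h) i j <;> rw [h i, h j]

theorem ProbabilityTheory.iIndepFun.measure_iInter_eq_pow {Ω ι β : Type*} [MeasurableSpace Ω]
    {P : Measure Ω} [Fintype ι] [MeasurableSpace β] [MeasurableSingletonClass β]
    {X : ι → Ω → β} (hindep : iIndepFun X P) {c : β} {q : ENNReal}
    (h : ∀ j, P {ω | X j ω = c} = q) : P (⋂ j, {ω | X j ω = c}) = q ^ Fintype.card ι := by
  rw [show ⋂ j, {ω | X j ω = c} = ⋂ j, X j ⁻¹' {c} from rfl,
    hindep.meas_iInter fun j => ⟨{c}, measurableSet_singleton c, rfl⟩]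
  exact (prod_congr rfl fun j _ => h j).trans (prod_const q)

theorem ProbabilityTheory.iIndepFun.measure_iInter_eq_union_iInter_eq {Ω ι β : Type*}
    [MeasurableSpace Ω] {P : Measure Ω} [Fintype ι] [Nonempty ι] [MeasurableSpace β]
    [MeasurableSingletonClass β] {X : ι → Ω → β} (hmeas : ∀ j, Measurable (X j))
    (hindep : iIndepFun X P) {a b : β} (hab : a ≠ b) {q : ENNReal}
    (ha : ∀ j, P {ω | X j ω = a} = q) (hb : ∀ j, P {ω | X j ω = b} = q) :
    P ((⋂ j, {ω | X j ω = a}) ∪ ⋂ j, {ω | X j ω = b}) = 2 * q ^ Fintype.card ι := by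
  obtain ⟨j₀⟩ := ‹Nonempty ι›
  have hdisj : Disjoint (⋂ j, {ω | X j ω = a}) (⋂ j, {ω | X j ω = b}) :=
    Set.disjoint_left.2 fun ω h₁ h₂ =>
      hab ((Set.mem_iInter.1 h₁ j₀).symm.trans (Set.mem_iInter.1 h₂ j₀))
  rw [measure_union hdisj (.iInter fun j => hmeas j (measurableSet_singleton b)),
    hindep.measure_iInter_eq_pow ha, hindep.measure_iInter_eq_pow hb, two_mul]

open scoped ENNReal

theorem circulant_sign_matrix_singularity_prime
    {Ω : Type*} [MeasurableSpace Ω] (P : Measure Ω) [IsProbabilityMeasure P]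
    (n : ℕ) (hp : n.Prime) (hn : 3 ≤ n)
    (X : Fin n → Ω → ℝ) (hmeas : ∀ j, Measurable (X j))
    (hindep : iIndepFun X P)
    (hdist : ∀ j, P {ω | X j ω = 1} = 1 / 2 ∧ P {ω | X j ω = -1} = 1 / 2) :
    (P {ω | (Matrix.of fun i j : Fin n => X (j - i) ω).det = 0}).toReal =
        (1 / 2 : ℝ) ^ (n - 1) ∧
      P {ω | (Matrix.of fun i j : Fin n => X (j - i) ω).det = 0} =
        P {ω | ∀ j j' : Fin n, X j ω = X j' ω} := by
  have := Fact.mk hp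
  have hsign : ∀ᵐ ω ∂P, ∀ j, X j ω = 1 ∨ X j ω = -1 := ae_all_iff.2 fun j =>
    ae_eq_or_eq_of_measure_add_measure_eq_one (hmeas j) (by norm_num)
      (by rw [(hdist j).1, (hdist j).2, ENNReal.add_halves])
  have hsing : {ω | (Matrix.of fun i j : Fin n => X (j - i) ω).det = 0} =ᵐ[P]
      {ω | ∀ j j' : Fin n, X j ω = X j' ω} := by
    refine Filter.eventuallyEq_set.2 ?_
    filter_upwards [hsign] with ω hω
    -- `circulant v i j = v (i - j)`, so the matrix of the statement is a transpose
    have := Matrix.det_circulant_eq_zero_iff_of_sign (by omega) hω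
    rwa [← Matrix.det_transpose] at this
  have hconst : {ω | ∀ j j' : Fin n, X j ω = X j' ω} =ᵐ[P]
      ((⋂ j, {ω | X j ω = 1}) ∪ ⋂ j, {ω | X j ω = -1} : Set Ω) := by
    refine Filter.eventuallyEq_set.2 ?_
    filter_upwards [hsign] with ω hω
    simpa only [Set.mem_union, Set.mem_iInter, Set.mem_ofPred_eq] using
      forall_eq_iff_of_forall_eq_or_eq hω
  have hprob : P ((⋂ j, {ω | X j ω = 1}) ∪ ⋂ j, {ω | X j ω = -1}) = (1 / 2) ^ (n - 1) := by
    rw [hindep.measure_iInter_eq_union_iInter_eq hmeas (by norm_num) (fun j => (hdist j).1)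
      (fun j => (hdist j).2), Fintype.card_fin, ← Nat.sub_add_cancel hp.one_le, pow_succ,
      mul_left_comm, one_div, ENNReal.mul_inv_cancel two_ne_zero ENNReal.ofNat_ne_top, mul_one,
      Nat.add_sub_cancel]
  refine ⟨?_, measure_congr hsing⟩
  rw [measure_congr hsing, measure_congr hconst, hprob, ENNReal.toReal_pow]
  norm_num
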